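/- Consider, under Łukasiewicz semantics, the interpretation I defined by: Δ^I = {1, 2, 3, …} ∪ {∞}; R^I(i, i+1) = 1 for every i ∈ {1,2,3,…}, R^I(∞, ∞) = 1, and R^I(u, v) = 0 for all other pairs; A^I(∞) = 1 and A^I(i) = (2^i − 1)/2^i for every i ∈ {1,2,3,…}. Then for every concept C one has C^I(∞) ∈ {0, 1}. -/
import Mathlib


/-- ALC concepts over a single atomic concept `A` and a single role `R`. -/
inductive ALCConcept : Type where
  | atom : ALCConcept
  | top  : ALCConcept
  | bot  : ALCConcept
  | conj : ALCConcept → ALCConcept → ALCConcept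
  | disj : ALCConcept → ALCConcept → ALCConcept
  | neg  : ALCConcept → ALCConcept
  | all  : ALCConcept → ALCConcept
  | ex   : ALCConcept → ALCConcept

/-- Łukasiewicz t-norm. -/
def lukT (x y : ℝ) : ℝ := max (x + y - 1) 0
/-- Łukasiewicz t-conorm. -/
def lukS (x y : ℝ) : ℝ := min (x + y) 1
/-- Łukasiewicz implication. -/
def lukImp (x y : ℝ) : ℝ := min (1 - x + y) 1

/-- Value of a concept at a point under Łukasiewicz semantics. -/
noncomputable def lukVal {Δ : Type} (A : Δ → ℝ) (R : Δ → Δ → ℝ) : ALCConcept → Δ → ℝ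
  | ALCConcept.atom, x => A x
  | ALCConcept.top, _ => 1
  | ALCConcept.bot, _ => 0
  | ALCConcept.conj C D, x => lukT (lukVal A R C x) (lukVal A R D x)
  | ALCConcept.disj C D, x => lukS (lukVal A R C x) (lukVal A R D x)
  | ALCConcept.neg C, x => 1 - lukVal A R C x
  | ALCConcept.all C, x => ⨅ y, lukImp (R x y) (lukVal A R C y)
  | ALCConcept.ex C, x => ⨆ y, lukT (R x y) (lukVal A R C y)

/-- Degree of subsumption `(C ⊑ D)^I` under Łukasiewicz semantics. -/
noncomputable def lukSub {Δ : Type} (A : Δ → ℝ) (R : Δ → Δ → ℝ) (C D : ALCConcept) : ℝ :=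
  ⨅ x, lukImp (lukVal A R C x) (lukVal A R D x)

/-- A fuzzy interpretation: nonempty domain, values in `[0,1]`. -/
def IsInterp {Δ : Type} (A : Δ → ℝ) (R : Δ → Δ → ℝ) : Prop :=
  Nonempty Δ ∧ (∀ x, A x ∈ Set.Icc (0:ℝ) 1) ∧ (∀ x y, R x y ∈ Set.Icc (0:ℝ) 1)

/-- Witnessed interpretation under Łukasiewicz semantics. -/
def Witnessed {Δ : Type} (A : Δ → ℝ) (R : Δ → Δ → ℝ) : Prop :=
  ∀ (C D : ALCConcept) (x : Δ),
    (∃ y, lukVal A R (ALCConcept.ex C) x = lukT (R x y) (lukVal A R C y)) ∧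
    (∃ y, lukVal A R (ALCConcept.all C) x = lukImp (R x y) (lukVal A R C y)) ∧
    (∃ y, lukSub A R C D = lukImp (lukVal A R C y) (lukVal A R D y))

/-- `I` (with designated element `a`) is a model of the knowledge base `K2`. -/
def ModelK2 {Δ : Type} (A : Δ → ℝ) (R : Δ → Δ → ℝ) (a : Δ) : Prop :=
  A a = 1/2 ∧
  lukSub A R ALCConcept.top (ALCConcept.ex ALCConcept.top) = 1 ∧
  (lukSub A R (ALCConcept.all ALCConcept.atom) (ALCConcept.ex ALCConcept.atom) = 1 ∧
   lukSub A R (ALCConcept.ex ALCConcept.atom) (ALCConcept.all ALCConcept.atom) = 1) ∧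
  (lukSub A R ALCConcept.atom (ALCConcept.conj (ALCConcept.all ALCConcept.atom) (ALCConcept.all ALCConcept.atom)) = 1 ∧
   lukSub A R (ALCConcept.conj (ALCConcept.all ALCConcept.atom) (ALCConcept.all ALCConcept.atom)) ALCConcept.atom = 1)

/-- The atomic-concept membership function of the model: `A^I(∞) = 1`,
`A^I(i) = (2^(i+1) - 1)/2^(i+1)` (indices shifted: `some i` is the element `i+1` of the paper). -/
noncomputable def A3 : Option ℕ → ℝ
  | Option.none => 1
  | Option.some i => ((2:ℝ)^(i+1) - 1) / (2:ℝ)^(i+1)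

/-- The role membership function of the model: `R^I(i, i+1) = 1`, `R^I(∞,∞) = 1`, else `0`. -/
noncomputable def R3 : Option ℕ → Option ℕ → ℝ
  | Option.some i, Option.some j => if j = i + 1 then 1 else 0
  | Option.none, Option.none => 1
  | _, _ => 0

lemma lukVal_mem_Icc {Δ : Type} (A : Δ → ℝ) (R : Δ → Δ → ℝ)
    (hA : ∀ x, A x ∈ Set.Icc (0:ℝ) 1) (hR : ∀ x y, R x y ∈ Set.Icc (0:ℝ) 1)
    (C : ALCConcept) : ∀ x, lukVal A R C x ∈ Set.Icc (0:ℝ) 1 := by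
  induction C with
  | atom => exact hA
  | top => intro x; simp [lukVal]
  | bot => intro x; simp [lukVal]
  | conj C D hC hD =>
    intro x
    obtain ⟨h1, h2⟩ := hC x; obtain ⟨h3, h4⟩ := hD x
    constructor
    · exact le_max_right _ _
    · apply max_le <;> linarith
  | disj C D hC hD =>
    intro x
    obtain ⟨h1, h2⟩ := hC x; obtain ⟨h3, h4⟩ := hD x
    constructor
    · exact le_min (by linarith) (by norm_num)
    · exact min_le_right _ _
  | neg C hC =>
    intro x
    obtain ⟨h1, h2⟩ := hC x
    exact ⟨by simp [lukVal]; linarith, by simp [lukVal]; linarith⟩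
  | all C hC =>
    intro x
    haveI : Nonempty Δ := ⟨x⟩
    have hb : ∀ y, lukImp (R x y) (lukVal A R C y) ∈ Set.Icc (0:ℝ) 1 := by
      intro y
      obtain ⟨h1, h2⟩ := hR x y; obtain ⟨h3, h4⟩ := hC y
      exact ⟨le_min (by linarith) (by norm_num), min_le_right _ _⟩
    have hbdd : BddBelow (Set.range fun y => lukImp (R x y) (lukVal A R C y)) :=
      ⟨0, by rintro _ ⟨y, rfl⟩; exact (hb y).1⟩
    constructor
    · exact le_ciInf fun y => (hb y).1
    · exact le_trans (ciInf_le hbdd x) (hb x).2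
  | ex C hC =>
    intro x
    haveI : Nonempty Δ := ⟨x⟩
    have hb : ∀ y, lukT (R x y) (lukVal A R C y) ∈ Set.Icc (0:ℝ) 1 := by
      intro y
      obtain ⟨h1, h2⟩ := hR x y; obtain ⟨h3, h4⟩ := hC y
      exact ⟨le_max_right _ _, max_le (by linarith) (by norm_num)⟩
    have hbdd : BddAbove (Set.range fun y => lukT (R x y) (lukVal A R C y)) :=
      ⟨1, by rintro _ ⟨y, rfl⟩; exact (hb y).2⟩
    constructor
    · exact le_trans (hb x).1 (le_ciSup hbdd x)
    · exact ciSup_le fun y => (hb y).2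

lemma A3_mem : ∀ x, A3 x ∈ Set.Icc (0:ℝ) 1 := by
  intro x
  cases x with
  | none => simp [A3]
  | some i =>
    have h : (0:ℝ) < 2^(i+1) := by positivity
    have h1 : (1:ℝ) ≤ 2^(i+1) := one_le_pow₀ (by norm_num)
    simp only [A3]
    constructor
    · apply div_nonneg _ h.le; linarith
    · rw [div_le_one h]; linarith

lemma R3_mem : ∀ x y, R3 x y ∈ Set.Icc (0:ℝ) 1 := by
  intro x y
  cases x <;> cases y <;> simp [R3] <;> split <;> norm_num

lemma lukVal3_mem (C : ALCConcept) (x : Option ℕ) :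
    lukVal A3 R3 C x ∈ Set.Icc (0:ℝ) 1 :=
  lukVal_mem_Icc A3 R3 A3_mem R3_mem C x

theorem stmt5 (C : ALCConcept) :
    lukVal A3 R3 C Option.none ∈ ({0, 1} : Set ℝ) := by
  induction C with
  | atom => right; simp [lukVal, A3]
  | top => right; simp [lukVal]
  | bot => left; simp [lukVal]
  | conj C D hC hD =>
    rcases hC with h | h <;> rcases hD with h' | h' <;>
      simp only [lukVal, lukT, Set.mem_singleton_iff] at * <;>
      rw [h, h'] <;> norm_num
  | disj C D hC hD =>
    rcases hC with h | h <;> rcases hD with h' | h' <;>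
      simp only [lukVal, lukS, Set.mem_singleton_iff] at * <;>
      rw [h, h'] <;> norm_num
  | neg C hC =>
    rcases hC with h | h <;>
      simp only [lukVal, Set.mem_singleton_iff] at * <;> rw [h] <;> norm_num
  | all C hC =>
    have key : lukVal A3 R3 (ALCConcept.all C) Option.none = lukVal A3 R3 C Option.none := by
      show (⨅ y, lukImp (R3 Option.none y) (lukVal A3 R3 C y)) = _
      have hb : ∀ y, lukImp (R3 Option.none y) (lukVal A3 R3 C y) ∈ Set.Icc (0:ℝ) 1 := by
        intro y
        obtain ⟨h1, h2⟩ := R3_mem Option.none y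
        obtain ⟨h3, h4⟩ := lukVal3_mem C y
        exact ⟨le_min (by linarith) (by norm_num), min_le_right _ _⟩
      have hnone : lukImp (R3 Option.none Option.none) (lukVal A3 R3 C Option.none)
          = lukVal A3 R3 C Option.none := by
        obtain ⟨h3, h4⟩ := lukVal3_mem C Option.none
        simp [lukImp, R3]
        linarith
      apply le_antisymm
      · exact le_trans (ciInf_le ⟨0, by rintro _ ⟨y, rfl⟩; exact (hb y).1⟩ Option.none)
          hnone.le
      · apply le_ciInf
        intro y
        cases y with
        | none => exact hnone.ge
        | some i =>
          obtain ⟨h3, h4⟩ := lukVal3_mem C (Option.some i)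
          obtain ⟨h5, h6⟩ := lukVal3_mem C Option.none
          simp [lukImp, R3]
          constructor <;> linarith
    rw [key]; exact hC
  | ex C hC =>
    have key : lukVal A3 R3 (ALCConcept.ex C) Option.none = lukVal A3 R3 C Option.none := by
      show (⨆ y, lukT (R3 Option.none y) (lukVal A3 R3 C y)) = _
      have hb : ∀ y, lukT (R3 Option.none y) (lukVal A3 R3 C y) ∈ Set.Icc (0:ℝ) 1 := by
        intro y
        obtain ⟨h1, h2⟩ := R3_mem Option.none y
        obtain ⟨h3, h4⟩ := lukVal3_mem C y
        exact ⟨le_max_right _ _, max_le (by linarith) (by norm_num)⟩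
      have hnone : lukT (R3 Option.none Option.none) (lukVal A3 R3 C Option.none)
          = lukVal A3 R3 C Option.none := by
        obtain ⟨h3, h4⟩ := lukVal3_mem C Option.none
        simp [lukT, R3]
        linarith
      apply le_antisymm
      · apply ciSup_le
        intro y
        cases y with
        | none => exact hnone.le
        | some i =>
          obtain ⟨h3, h4⟩ := lukVal3_mem C (Option.some i)
          obtain ⟨h5, h6⟩ := lukVal3_mem C Option.none
          simp [lukT, R3]
          constructor <;> linarith
      · have hbdd : BddAbove (Set.range fun y => lukT (R3 Option.none y) (lukVal A3 R3 C y)) :=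
          ⟨1, by rintro _ ⟨y, rfl⟩; exact (hb y).2⟩
        exact le_trans hnone.ge (le_ciSup hbdd Option.none)
    rw [key]; exact hC
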